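/- arXiv:1507.04734 — 8 statements merged into one kernel-verified Lean document; each statement's English description precedes it below -/
import Mathlib

section
/- Let M̄ be a real symmetric m×m matrix with nonnegative entries, and let M̃ denote its comparison matrix, defined by M̃_{ii} = M̄_{ii} and M̃_{ij} = −M̄_{ij} for i ≠ j. If M̃ is positive semidefinite, then the function X ↦ Σ_{i,j=1}^m M̄_{ij} |x_iᵀ x_j| is convex on ℝ^{n×m}, where x_1, ..., x_m are the columns of X. Moreover, for every symmetric matrix M with M_{ii} = M̄_{ii} and |M_{ij}| ≤ M̄_{ij} for i ≠ j, the minimum eigenvalue of M is at least the minimum eigenvalue of M̃. -/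
/-!
At a point `Z`, the supremum `Ω(Z) = sup_{|Mᵢⱼ| ≤ M̄ᵢⱼ} tr(Z M Zᵀ)` is attained at the
matrix `± M̄ᵢⱼ` carrying the signs of `ZᵀZ`. The quadratic form of every symmetric `M` in the
box dominates that of the comparison matrix, `|x|ᵀ M̃ |x| ≤ xᵀ M x`, so these maximisers are
positive semidefinite and `Ω` is touched at every point by a convex quadratic minorant, hence
convex. The same domination applied to `M̃ - λ I` and `M - λ I`, with `λ` the least eigenvalue
of `M̃`, gives the eigenvalue bound.
-/

open Matrix

theorem LinearMap.BilinForm.convexOn_apply_self {E : Type*} [AddCommGroup E] [Module ℝ E]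
    (β : LinearMap.BilinForm ℝ E) (hβ : β.IsSymm) (hβ₀ : ∀ x, 0 ≤ β x x) :
    ConvexOn ℝ Set.univ fun x => β x x := by
  refine ⟨convex_univ, fun x _ y _ a b ha hb hab => ?_⟩
  have hgap : a • β x x + b • β y y - β (a • x + b • y) (a • x + b • y) =
      a * b * β (x - y) (x - y) := by
    simp only [map_add, map_smul, map_sub, LinearMap.add_apply, LinearMap.smul_apply,
      LinearMap.sub_apply, smul_eq_mul, hβ.eq y x]
    obtain rfl : b = 1 - a := by linarith
    ring
  nlinarith [mul_nonneg (mul_nonneg ha hb) (hβ₀ (x - y))]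

theorem convexOn_univ_of_forall_exists_le_eq {𝕜 E β : Type*} [Field 𝕜] [LinearOrder 𝕜]
    [AddCommGroup E] [Module 𝕜 E] [AddCommMonoid β] [PartialOrder β] [IsOrderedAddMonoid β]
    [Module 𝕜 β] [PosSMulMono 𝕜 β] {f : E → β}
    (h : ∀ z, ∃ g : E → β, ConvexOn 𝕜 Set.univ g ∧ g ≤ f ∧ g z = f z) :
    ConvexOn 𝕜 Set.univ f := by
  refine ⟨convex_univ, fun x _ y _ a b ha hb hab => ?_⟩
  obtain ⟨g, hg, hgf, hgz⟩ := h (a • x + b • y)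
  calc f (a • x + b • y) = g (a • x + b • y) := hgz.symm
    _ ≤ a • g x + b • g y := hg.2 trivial trivial ha hb hab
    _ ≤ a • f x + b • f y := by gcongr <;> apply hgf

namespace Matrix

section Quadratic

variable {p n : Type*} [Fintype p] [Fintype n]

theorem sum_mul_transpose_mul_self_eq_trace (A : Matrix n n ℝ) (X : Matrix p n ℝ) :
    ∑ i, ∑ j, A i j * (Xᵀ * X) i j = (X * A * Xᵀ).trace := by
  simp only [trace, diag, mul_apply, transpose_apply, Finset.mul_sum, Finset.sum_mul]
  refine (Finset.sum_congr rfl fun k _ => Finset.sum_comm).trans ?_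
  rw [Finset.sum_comm]
  refine Finset.sum_congr rfl fun i _ => ?_
  rw [Finset.sum_comm]
  exact Finset.sum_congr rfl fun j _ => Finset.sum_congr rfl fun k _ => by ring

theorem PosSemidef.convexOn_trace_mul_mul_transpose {A : Matrix n n ℝ} (hA : A.PosSemidef) :
    ConvexOn ℝ Set.univ fun X : Matrix p n ℝ => (X * A * Xᵀ).trace := by
  let β : LinearMap.BilinForm ℝ (Matrix p n ℝ) :=
    LinearMap.mk₂ ℝ (fun X Y => (X * A * Yᵀ).trace)
      (by simp [Matrix.add_mul]) (by simp) (by simp [Matrix.mul_add]) (by simp)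
  refine β.convexOn_apply_self ⟨fun X Y => ?_⟩ fun X => ?_
  · change (X * A * Yᵀ).trace = (Y * A * Xᵀ).trace
    have hAt : Aᵀ = A := (conjTranspose_eq_transpose_of_trivial A).symm.trans hA.isHermitian
    rw [← trace_transpose, transpose_mul, transpose_mul, transpose_transpose, hAt,
      Matrix.mul_assoc]
  · exact (hA.mul_mul_conjTranspose_same X).trace_nonneg

end Quadratic

section Comparison

variable {n : Type*} [Fintype n] {A B : Matrix n n ℝ}

theorem dotProduct_abs_mulVec_abs_le (hdiag : ∀ i, A i i ≤ B i i)
    (hoff : ∀ i j, i ≠ j → A i j ≤ -|B i j|) (x : n → ℝ) :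
    |x| ⬝ᵥ A *ᵥ |x| ≤ x ⬝ᵥ B *ᵥ x := by
  simp only [dotProduct, mulVec, Finset.mul_sum, Pi.abs_apply]
  refine Finset.sum_le_sum fun i _ => Finset.sum_le_sum fun j _ => ?_
  rcases eq_or_ne i j with rfl | hij
  · rw [mul_left_comm, abs_mul_abs_self, mul_left_comm]
    linarith [mul_le_mul_of_nonneg_right (hdiag i) (mul_self_nonneg (x i))]
  · have : |B i j * (x i * x j)| = |B i j| * (|x i| * |x j|) := by rw [abs_mul, abs_mul]
    nlinarith [neg_abs_le (B i j * (x i * x j)), hoff i j hij,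
      mul_nonneg (abs_nonneg (x i)) (abs_nonneg (x j))]

theorem PosSemidef.of_le_neg_abs (hA : A.PosSemidef) (hB : B.IsHermitian)
    (hdiag : ∀ i, A i i ≤ B i i) (hoff : ∀ i j, i ≠ j → A i j ≤ -|B i j|) : B.PosSemidef :=
  .of_dotProduct_mulVec_nonneg hB fun x =>
    (hA.dotProduct_mulVec_nonneg |x|).trans (dotProduct_abs_mulVec_abs_le hdiag hoff x)

open scoped MatrixOrder in
theorem IsHermitian.posSemidef_sub_smul_one_iff [DecidableEq n] (hA : A.IsHermitian)
    {c : ℝ} :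
    (A - c • 1).PosSemidef ↔ ∀ k, c ≤ hA.eigenvalues k := by
  rw [← nonneg_iff_posSemidef, sub_nonneg, ← Algebra.algebraMap_eq_smul_one,
    algebraMap_le_iff_le_spectrum hA.isSelfAdjoint, hA.spectrum_real_eq_range_eigenvalues]
  simp

theorem IsHermitian.iInf_eigenvalues_le_of_le_neg_abs [DecidableEq n] (hA : A.IsHermitian)
    (hB : B.IsHermitian) (hdiag : ∀ i, A i i ≤ B i i)
    (hoff : ∀ i j, i ≠ j → A i j ≤ -|B i j|) :
    ⨅ k, hA.eigenvalues k ≤ ⨅ k, hB.eigenvalues k := by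
  rcases isEmpty_or_nonempty n with hn | hn
  · simp
  set c := ⨅ k, hA.eigenvalues k
  have hcA : (A - c • 1).PosSemidef :=
    hA.posSemidef_sub_smul_one_iff.2 fun k => ciInf_le (Set.finite_range _).bddBelow k
  have hcB : (B - c • 1).PosSemidef :=
    hcA.of_le_neg_abs (hB.sub (isHermitian_one.smul (IsSelfAdjoint.all c)))
      (fun i => by simpa using hdiag i)
      fun i j hij => by simpa [one_apply_ne hij] using hoff i j hij
  exact le_ciInf (hB.posSemidef_sub_smul_one_iff.1 hcB)

end Comparison

section SignPattern

variable {n : Type*}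

noncomputable def signPattern (B G : Matrix n n ℝ) : Matrix n n ℝ :=
  of fun i j => if G i j < 0 then -B i j else B i j

variable (B G : Matrix n n ℝ)

theorem abs_signPattern_apply (i j : n) : |signPattern B G i j| = |B i j| := by
  simp only [signPattern, of_apply]
  split_ifs <;> simp

theorem signPattern_apply_of_nonneg {i j : n} (h : 0 ≤ G i j) : signPattern B G i j = B i j := by
  simp [signPattern, not_lt.2 h]

theorem signPattern_mul_apply (i j : n) : signPattern B G i j * G i j = B i j * |G i j| := by
  simp only [signPattern, of_apply]
  split_ifs with h
  · rw [abs_of_neg h]; ring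
  · rw [abs_of_nonneg (not_lt.1 h)]

theorem IsSymm.signPattern {B G : Matrix n n ℝ} (hB : B.IsSymm) (hG : G.IsSymm) :
    (signPattern B G).IsSymm := by
  ext i j
  simp only [transpose_apply, Matrix.signPattern, of_apply, hB.apply, hG.apply]

end SignPattern

theorem sum_mul_le_sum_mul_abs {m n : Type*} [Fintype m] [Fintype n] {S B : Matrix m n ℝ}
    (h : ∀ i j, |S i j| ≤ B i j) (G : Matrix m n ℝ) :
    ∑ i, ∑ j, S i j * G i j ≤ ∑ i, ∑ j, B i j * |G i j| := by
  refine Finset.sum_le_sum fun i _ => Finset.sum_le_sum fun j _ => ?_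
  calc S i j * G i j ≤ |S i j| * |G i j| := by rw [← abs_mul]; exact le_abs_self _
    _ ≤ B i j * |G i j| := by gcongr; exact h i j

theorem transpose_mul_self_apply_self_nonneg {p n : Type*} [Fintype p] (Z : Matrix p n ℝ)
    (i : n) : 0 ≤ (Zᵀ * Z) i i :=
  Finset.sum_nonneg fun k _ => mul_self_nonneg (Z k i)

theorem convexOn_sum_mul_abs_transpose_mul_self {p n : Type*} [Fintype p] [Fintype n]
    {B C : Matrix n n ℝ} (hB : B.IsSymm) (hB₀ : ∀ i j, 0 ≤ B i j) (hC : C.PosSemidef)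
    (hdiag : ∀ i, C i i ≤ B i i) (hoff : ∀ i j, i ≠ j → C i j ≤ -B i j) :
    ConvexOn ℝ Set.univ fun X : Matrix p n ℝ => ∑ i, ∑ j, B i j * |(Xᵀ * X) i j| := by
  refine convexOn_univ_of_forall_exists_le_eq fun Z => ?_
  set S := signPattern B (Zᵀ * Z)
  have habsS (i j) : |S i j| = B i j := by rw [abs_signPattern_apply, abs_of_nonneg (hB₀ i j)]
  have hgram : (Zᵀ * Z).IsSymm := by rw [IsSymm, transpose_mul, transpose_transpose]
  have hS : S.PosSemidef := by
    refine hC.of_le_neg_abs (isHermitian_iff_isSymm.2 (hB.signPattern hgram))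
      (fun i => ?_) fun i j hij => (habsS i j).symm ▸ hoff i j hij
    exact (hdiag i).trans_eq
      (signPattern_apply_of_nonneg B _ (transpose_mul_self_apply_self_nonneg Z i)).symm
  refine ⟨fun X => ∑ i, ∑ j, S i j * (Xᵀ * X) i j, ?_,
    fun X => sum_mul_le_sum_mul_abs (fun i j => (habsS i j).le) _, ?_⟩
  · simp_rw [sum_mul_transpose_mul_self_eq_trace]
    exact hS.convexOn_trace_mul_mul_transpose
  · simp only [S, signPattern_mul_apply]

end Matrix

/-- If the comparison matrix `M̃` of an entrywise nonnegative symmetric `M̄` is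
positive semidefinite, then `X ↦ Σᵢⱼ M̄ᵢⱼ |xᵢᵀxⱼ|` is convex; moreover every symmetric
`M` with the same diagonal as `M̄` and `|Mᵢⱼ| ≤ M̄ᵢⱼ` off the diagonal has minimum
eigenvalue at least the minimum eigenvalue of `M̃`. -/
theorem comparison_matrix_psd_convex {n m : ℕ}
    (Mbar : Matrix (Fin m) (Fin m) ℝ)
    (hsym : Mbar.IsSymm) (hnn : ∀ i j, 0 ≤ Mbar i j)
    (Mtilde : Matrix (Fin m) (Fin m) ℝ)
    (hMt : ∀ i j, Mtilde i j = if i = j then Mbar i j else -(Mbar i j))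
    (hpsd : Mtilde.PosSemidef) :
    ConvexOn ℝ Set.univ
      (fun X : Matrix (Fin n) (Fin m) ℝ => ∑ i, ∑ j, Mbar i j * |(Xᵀ * X) i j|) ∧
    ∀ (M : Matrix (Fin m) (Fin m) ℝ) (hM : M.IsHermitian),
      (∀ i, M i i = Mbar i i) → (∀ i j, i ≠ j → |M i j| ≤ Mbar i j) →
      (⨅ k, hpsd.isHermitian.eigenvalues k) ≤ ⨅ k, hM.eigenvalues k := by
  refine ⟨convexOn_sum_mul_abs_transpose_mul_self hsym hnn hpsd (fun i => by simp [hMt])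
    fun i j hij => by simp [hMt, hij], fun M hM hdiag hoff => ?_⟩
  refine hpsd.isHermitian.iInf_eigenvalues_le_of_le_neg_abs hM (fun i => by simp [hMt, hdiag])
    fun i j hij => ?_
  rw [hMt, if_neg hij]
  exact neg_le_neg (hoff i j hij)
end

section
/- Let Ω: ℝ^{n×m} → ℝ satisfy Ω(θX) = θ²Ω(X) for all θ ∈ ℝ and X ∈ ℝ^{n×m}, and suppose Ω(X) ≥ 0 for all X. Then Ω is convex if and only if the function N(X) = √(Ω(X)) is a semi-norm, i.e., N satisfies N(θX) = |θ|·N(X) and N(X+Y) ≤ N(X) + N(Y) for all X, Y and θ. Moreover, if Ω is convex then Ω(X) ≥ 0 holds automatically for all X (without assuming nonnegativity), and if Ω is strictly convex then N is a norm. -/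
/-!
Homogeneity gives `√Ω (θ • X) = |θ| √Ω X` outright. For the triangle inequality, write
`X + Y = t • (t⁻¹ • X) + (1 - t) • ((1 - t)⁻¹ • Y)`: convexity and homogeneity give
`Ω (X + Y) ≤ Ω X / t + Ω Y / (1 - t)`, and `t = a / (a + b)` with `a ≈ √Ω X`, `b ≈ √Ω Y`
yields `Ω (X + Y) ≤ (a + b) ^ 2`. Conversely a semi-norm is convex and nonnegative, so its
square `Ω` is convex. Convexity between `X` and `-X` gives `0 = Ω 0 ≤ Ω X`, and strict
convexity between `X ≠ 0` and `0` rules out `Ω X = 0`, since `Ω (X / 2) = Ω X / 4`.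
-/

open Set

def IsHomogeneousOfDegreeTwo {E : Type*} [AddCommGroup E] [Module ℝ E] (Ω : E → ℝ) : Prop :=
  ∀ (θ : ℝ) (x : E), Ω (θ • x) = θ ^ 2 * Ω x

namespace IsHomogeneousOfDegreeTwo

variable {E : Type*} [AddCommGroup E] [Module ℝ E] {Ω : E → ℝ}

theorem map_zero (hΩ : IsHomogeneousOfDegreeTwo Ω) : Ω 0 = 0 := by
  simpa using hΩ 0 0

theorem map_neg (hΩ : IsHomogeneousOfDegreeTwo Ω) (x : E) : Ω (-x) = Ω x := by
  simpa using hΩ (-1) x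

theorem sqrt_smul (hΩ : IsHomogeneousOfDegreeTwo Ω) (θ : ℝ) (x : E) :
    √(Ω (θ • x)) = |θ| * √(Ω x) := by
  rw [hΩ, Real.sqrt_mul (sq_nonneg θ), Real.sqrt_sq_eq_abs]

theorem nonneg_of_convexOn (hΩ : IsHomogeneousOfDegreeTwo Ω) (hc : ConvexOn ℝ univ Ω) (x : E) :
    0 ≤ Ω x := by
  have h := hc.2 (mem_univ x) (mem_univ (-x)) (by norm_num : (0 : ℝ) ≤ 1 / 2)
    (by norm_num : (0 : ℝ) ≤ 1 / 2) (by norm_num)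
  rw [smul_neg, add_neg_cancel, hΩ.map_zero, hΩ.map_neg, smul_eq_mul] at h
  linarith

theorem le_div_add_div_of_convexOn (hΩ : IsHomogeneousOfDegreeTwo Ω) (hc : ConvexOn ℝ univ Ω)
    (x y : E) {t : ℝ} (ht₀ : 0 < t) (ht₁ : t < 1) :
    Ω (x + y) ≤ Ω x / t + Ω y / (1 - t) := by
  have hs : 0 < 1 - t := sub_pos.mpr ht₁
  have h := hc.2 (mem_univ (t⁻¹ • x)) (mem_univ ((1 - t)⁻¹ • y)) ht₀.le hs.le (by ring)
  rw [smul_inv_smul₀ ht₀.ne', smul_inv_smul₀ hs.ne', hΩ, hΩ, smul_eq_mul, smul_eq_mul] at h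
  have hcancel (s c : ℝ) : s * (s⁻¹ ^ 2 * c) = c / s := by rw [inv_pow, sq]; field_simp
  rwa [hcancel, hcancel] at h

theorem le_add_sq_of_convexOn (hΩ : IsHomogeneousOfDegreeTwo Ω) (hc : ConvexOn ℝ univ Ω)
    {x y : E} {a b : ℝ} (ha : 0 < a) (hb : 0 < b) (hxa : Ω x ≤ a ^ 2) (hyb : Ω y ≤ b ^ 2) :
    Ω (x + y) ≤ (a + b) ^ 2 := by
  have hab : 0 < a + b := add_pos ha hb
  -- `t = a / (a + b)` minimises `a ^ 2 / t + b ^ 2 / (1 - t)`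
  calc Ω (x + y) ≤ Ω x / (a / (a + b)) + Ω y / (1 - a / (a + b)) :=
        hΩ.le_div_add_div_of_convexOn hc x y (by positivity) (by rw [div_lt_one hab]; linarith)
    _ = (a + b) * (Ω x / a + Ω y / b) := by
      rw [one_sub_div hab.ne', add_sub_cancel_left]; field_simp
    _ ≤ (a + b) * (a ^ 2 / a + b ^ 2 / b) := by gcongr
    _ = (a + b) ^ 2 := by field_simp

theorem sqrt_add_le_of_convexOn (hΩ : IsHomogeneousOfDegreeTwo Ω) (hc : ConvexOn ℝ univ Ω)
    (x y : E) : √(Ω (x + y)) ≤ √(Ω x) + √(Ω y) := by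
  refine le_of_forall_pos_le_add fun ε hε => ?_
  have hx : Ω x ≤ (√(Ω x) + ε / 2) ^ 2 := (Real.sqrt_le_left (by positivity)).mp (by linarith)
  have hy : Ω y ≤ (√(Ω y) + ε / 2) ^ 2 := (Real.sqrt_le_left (by positivity)).mp (by linarith)
  calc √(Ω (x + y)) ≤ (√(Ω x) + ε / 2) + (√(Ω y) + ε / 2) :=
        (Real.sqrt_le_left (by positivity)).mpr
          (hΩ.le_add_sq_of_convexOn hc (by positivity) (by positivity) hx hy)
    _ = √(Ω x) + √(Ω y) + ε := by ring

theorem convexOn_of_sqrt_add_le (hΩ : IsHomogeneousOfDegreeTwo Ω) (h₀ : ∀ x, 0 ≤ Ω x)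
    (hadd : ∀ x y, √(Ω (x + y)) ≤ √(Ω x) + √(Ω y)) : ConvexOn ℝ univ Ω := by
  let N : Seminorm ℝ E := Seminorm.of (fun x => √(Ω x)) hadd (by simpa using hΩ.sqrt_smul)
  have hN : ⇑N ^ 2 = Ω := funext fun x => Real.sq_sqrt (h₀ x)
  simpa [hN] using N.convexOn.pow (fun x _ => apply_nonneg N x) 2

theorem eq_zero_of_strictConvexOn (hΩ : IsHomogeneousOfDegreeTwo Ω)
    (hsc : StrictConvexOn ℝ univ Ω) {x : E} (hx : Ω x = 0) : x = 0 := by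
  by_contra hne
  have h := hsc.2 (mem_univ x) (mem_univ 0) hne (by norm_num : (0 : ℝ) < 1 / 2)
    (by norm_num : (0 : ℝ) < 1 / 2) (by norm_num)
  rw [smul_zero, add_zero, hΩ, hx, hΩ.map_zero] at h
  norm_num at h

end IsHomogeneousOfDegreeTwo

/-- For a nonnegative, order-2 homogeneous `Ω`, convexity of `Ω` is equivalent to
`√Ω` being a semi-norm; convexity of `Ω` implies nonnegativity automatically; and
strict convexity makes `√Ω` a norm. -/
theorem sqrt_of_quadratic_homogeneous_seminorm {n m : ℕ}
    (Ω : Matrix (Fin n) (Fin m) ℝ → ℝ)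
    (hhom : ∀ (θ : ℝ) (X : Matrix (Fin n) (Fin m) ℝ), Ω (θ • X) = θ ^ 2 * Ω X) :
    ((∀ X, 0 ≤ Ω X) →
      (ConvexOn ℝ Set.univ Ω ↔
        ((∀ (θ : ℝ) (X : Matrix (Fin n) (Fin m) ℝ),
            Real.sqrt (Ω (θ • X)) = |θ| * Real.sqrt (Ω X)) ∧
         (∀ X Y : Matrix (Fin n) (Fin m) ℝ,
            Real.sqrt (Ω (X + Y)) ≤ Real.sqrt (Ω X) + Real.sqrt (Ω Y))))) ∧
    (ConvexOn ℝ Set.univ Ω → ∀ X, 0 ≤ Ω X) ∧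
    (StrictConvexOn ℝ Set.univ Ω →
      ((∀ (θ : ℝ) (X : Matrix (Fin n) (Fin m) ℝ),
          Real.sqrt (Ω (θ • X)) = |θ| * Real.sqrt (Ω X)) ∧
       (∀ X Y : Matrix (Fin n) (Fin m) ℝ,
          Real.sqrt (Ω (X + Y)) ≤ Real.sqrt (Ω X) + Real.sqrt (Ω Y)) ∧
       (∀ X : Matrix (Fin n) (Fin m) ℝ, Real.sqrt (Ω X) = 0 → X = 0))) := by
  have hΩ : IsHomogeneousOfDegreeTwo Ω := hhom
  refine ⟨fun h₀ => ⟨fun hc => ⟨hΩ.sqrt_smul, hΩ.sqrt_add_le_of_convexOn hc⟩,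
      fun ⟨_, hadd⟩ => hΩ.convexOn_of_sqrt_add_le h₀ hadd⟩,
    hΩ.nonneg_of_convexOn, fun hsc => ?_⟩
  have hc := hsc.convexOn
  refine ⟨hΩ.sqrt_smul, hΩ.sqrt_add_le_of_convexOn hc, fun X hX => ?_⟩
  exact hΩ.eq_zero_of_strictConvexOn hsc
    (le_antisymm (Real.sqrt_eq_zero'.mp hX) (hΩ.nonneg_of_convexOn hc X))
end

section
/- Let 𝓜 be a compact set of real symmetric m×m matrices and let Ω_𝓜(X) = sup_{M ∈ 𝓜} trace(X M Xᵀ). Fix X ∈ ℝ^{n×m}, and suppose M₀ ∈ 𝓜 is positive semidefinite and attains the supremum, i.e., trace(X M₀ Xᵀ) = Ω_𝓜(X). Then 2XM₀ is a subgradient of Ω_𝓜 at X: for all Y ∈ ℝ^{n×m}, Ω_𝓜(Y) ≥ Ω_𝓜(X) + ⟨2XM₀, Y − X⟩, where ⟨A, B⟩ = trace(AᵀB). -/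
open Matrix

/-! For each fixed `M`, `Z ↦ tr(Z M Zᵀ)` expands around `X` as
`tr(X M Xᵀ) + ⟨2 X M, Z - X⟩ + tr((Z - X) M (Z - X)ᵀ)`, and the last term is nonnegative when
`M` is positive semidefinite. Taking `M = M₀`, which attains `Ω X`, and bounding
`tr(Y M₀ Yᵀ) ≤ Ω Y` (the supremum is finite because `𝓜` is compact) gives the inequality. -/

theorem le_ciSup₂_of_bddAbove_image {α β : Type*} [ConditionallyCompleteLattice α] {f : β → α}
    {s : Set β} (H : BddAbove (f '' s)) {c : β} (hc : c ∈ s) : f c ≤ ⨆ x ∈ s, f x :=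
  le_ciSup₂ (f := fun x _ => f x)
    (H.mono <| Set.iUnion_subset fun _ ↦ Set.range_subset_iff.2 fun hx ↦ Set.mem_image_of_mem f hx)
    c hc

namespace Matrix

variable {ι κ R : Type*} [Fintype ι] [Fintype κ]

theorem trace_mul_mul_transpose_eq_add [CommRing R] {M : Matrix κ κ R} (hM : M.IsSymm)
    (X Y : Matrix ι κ R) :
    (Y * M * Yᵀ).trace = (X * M * Xᵀ).trace + (((2 : R) • (X * M))ᵀ * (Y - X)).trace
      + ((Y - X) * M * (Y - X)ᵀ).trace := by
  obtain ⟨D, rfl⟩ : ∃ D, Y = X + D := ⟨Y - X, by abel⟩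
  have hcross : (X * M * Dᵀ).trace = (D * M * Xᵀ).trace := by
    rw [← trace_transpose, transpose_mul, transpose_mul, transpose_transpose, hM.eq,
      ← Matrix.mul_assoc]
  have hgrad : ((X * M)ᵀ * D).trace = (D * M * Xᵀ).trace := by
    rw [transpose_mul, hM.eq, trace_mul_comm, ← Matrix.mul_assoc]
  simp only [add_sub_cancel_left, transpose_add, Matrix.add_mul, Matrix.mul_add, trace_add,
    transpose_smul, smul_mul, trace_smul, hcross, hgrad, smul_eq_mul]
  ring

theorem PosSemidef.trace_mul_mul_transpose_add_le [CommRing R] [PartialOrder R] [IsOrderedRing R]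
    [StarRing R] [TrivialStar R] {M : Matrix κ κ R} (hM : M.PosSemidef) (X Y : Matrix ι κ R) :
    (X * M * Xᵀ).trace + (((2 : R) • (X * M))ᵀ * (Y - X)).trace ≤ (Y * M * Yᵀ).trace := by
  have hsymm : M.IsSymm := (conjTranspose_eq_transpose_of_trivial M).symm.trans hM.isHermitian.eq
  have hquad := (hM.mul_mul_conjTranspose_same (Y - X)).trace_nonneg
  rw [conjTranspose_eq_transpose_of_trivial] at hquad
  rw [trace_mul_mul_transpose_eq_add hsymm X Y]
  exact le_add_of_nonneg_right hquad

end Matrix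

theorem vgf_subgradient_general {n m : ℕ}
    (𝓜 : Set (Matrix (Fin m) (Fin m) ℝ))
    (hcpt : IsCompact 𝓜)
    (Ω : Matrix (Fin n) (Fin m) ℝ → ℝ)
    (hΩ : ∀ X, Ω X = ⨆ M ∈ 𝓜, (X * M * Xᵀ).trace)
    (X : Matrix (Fin n) (Fin m) ℝ) (M₀ : Matrix (Fin m) (Fin m) ℝ)
    (hM₀ : M₀ ∈ 𝓜) (hpsd : M₀.PosSemidef)
    (hatt : (X * M₀ * Xᵀ).trace = Ω X) :
    ∀ Y : Matrix (Fin n) (Fin m) ℝ,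
      Ω X + (((2 : ℝ) • (X * M₀))ᵀ * (Y - X)).trace ≤ Ω Y := by
  intro Y
  have hcont : Continuous fun M : Matrix (Fin m) (Fin m) ℝ => (Y * M * Yᵀ).trace := by
    fun_prop
  calc Ω X + (((2 : ℝ) • (X * M₀))ᵀ * (Y - X)).trace
      ≤ (Y * M₀ * Yᵀ).trace := hatt ▸ hpsd.trace_mul_mul_transpose_add_le X Y
    _ ≤ Ω Y := hΩ Y ▸ le_ciSup₂_of_bddAbove_image (hcpt.image hcont).bddAbove hM₀

/-- If `M₀ ∈ 𝓜` is positive semidefinite and attains the supremum defining the VGF at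
`X`, then `2 X M₀` is a subgradient of the VGF at `X`. -/
theorem vgf_subgradient {n m : ℕ}
    (𝓜 : Set (Matrix (Fin m) (Fin m) ℝ))
    (hcpt : IsCompact 𝓜) (hsym : ∀ M ∈ 𝓜, M.IsSymm)
    (Ω : Matrix (Fin n) (Fin m) ℝ → ℝ)
    (hΩ : ∀ X, Ω X = ⨆ M ∈ 𝓜, (X * M * Xᵀ).trace)
    (X : Matrix (Fin n) (Fin m) ℝ) (M₀ : Matrix (Fin m) (Fin m) ℝ)
    (hM₀ : M₀ ∈ 𝓜) (hpsd : M₀.PosSemidef)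
    (hatt : (X * M₀ * Xᵀ).trace = Ω X) :
    ∀ Y : Matrix (Fin n) (Fin m) ℝ,
      Ω X + (((2 : ℝ) • (X * M₀))ᵀ * (Y - X)).trace ≤ Ω Y :=
  vgf_subgradient_general 𝓜 hcpt Ω hΩ X M₀ hM₀ hpsd hatt
end

section
/- Let 𝓜 be a compact convex set of real symmetric m×m matrices containing the zero matrix, and suppose Ω_𝓜(X) = sup_{M ∈ 𝓜} trace(X M Xᵀ) is convex on ℝ^{n×m}. Then the function Ψ(X) = Ω_𝓜(|X|), where |X| is the entrywise absolute value of X, is convex if and only if Ω_𝓜(|X|) = inf{ Ω_𝓜(Y) : Y ∈ ℝ^{n×m}, Y ≥ |X| entrywise } for every X ∈ ℝ^{n×m}. -/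
open Matrix

/-- One-entry step: decreasing the absolute value of a single entry does not
increase a convex sign-invariant function. -/
lemma vgf_step {n m : ℕ} (Ψ : Matrix (Fin n) (Fin m) ℝ → ℝ)
    (hconv : ConvexOn ℝ Set.univ Ψ)
    (habs : ∀ X Y : Matrix (Fin n) (Fin m) ℝ, (∀ i j, |X i j| = |Y i j|) → Ψ X = Ψ Y)
    (D : Matrix (Fin n) (Fin m) ℝ) (i₀ : Fin n) (j₀ : Fin m) (a : ℝ)
    (ha : |a| ≤ |D i₀ j₀|) :
    Ψ (Matrix.of fun i j => if i = i₀ ∧ j = j₀ then a else D i j) ≤ Ψ D := by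
  set b := D i₀ j₀ with hbdef
  by_cases hb : b = 0
  · have ha0 : a = 0 := by
      have := ha; rw [hb, abs_zero] at this; exact abs_nonpos_iff.mp this
    have : (Matrix.of fun i j => if i = i₀ ∧ j = j₀ then a else D i j) = D := by
      ext i j
      simp only [Matrix.of_apply]
      split_ifs with h
      · rcases h with ⟨rfl, rfl⟩; rw [ha0, ← hbdef, hb]
      · rfl
    rw [this]
  · set t := a / b with htdef
    have hbpos : 0 < |b| := abs_pos.mpr hb
    have ht : |t| ≤ 1 := by
      rw [htdef, abs_div]
      exact (div_le_one hbpos).mpr ha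
    have hta : t * b = a := div_mul_cancel₀ a hb
    obtain ⟨ht1, ht2⟩ := abs_le.mp ht
    set θ := (1 + t) / 2 with hθdef
    set μ := (1 - t) / 2 with hμdef
    have hθ : 0 ≤ θ := by rw [hθdef]; linarith
    have hμ : 0 ≤ μ := by rw [hμdef]; linarith
    have hθμ : θ + μ = 1 := by rw [hθdef, hμdef]; ring
    set D' : Matrix (Fin n) (Fin m) ℝ :=
      Matrix.of fun i j => if i = i₀ ∧ j = j₀ then -b else D i j with hD'def
    have hcomb : (Matrix.of fun i j => if i = i₀ ∧ j = j₀ then a else D i j)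
        = θ • D + μ • D' := by
      ext i j
      simp only [Matrix.of_apply, Matrix.add_apply, Matrix.smul_apply, smul_eq_mul,
        hD'def]
      split_ifs with h
      · rcases h with ⟨rfl, rfl⟩
        rw [← hbdef, ← hta, hθdef, hμdef]; ring
      · rw [← add_mul, hθμ, one_mul]
    have hΨD' : Ψ D' = Ψ D := by
      apply habs
      intro i j
      simp only [hD'def, Matrix.of_apply]
      split_ifs with h
      · rcases h with ⟨rfl, rfl⟩; rw [abs_neg, hbdef]
      · rfl
    calc Ψ (Matrix.of fun i j => if i = i₀ ∧ j = j₀ then a else D i j)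
        = Ψ (θ • D + μ • D') := by rw [hcomb]
      _ ≤ θ • Ψ D + μ • Ψ D' :=
          hconv.2 (Set.mem_univ D) (Set.mem_univ D') hθ hμ hθμ
      _ = θ * Ψ D + μ * Ψ D := by rw [smul_eq_mul, smul_eq_mul, hΨD']
      _ = Ψ D := by rw [← add_mul, hθμ, one_mul]

/-- Entrywise-abs monotonicity of a convex sign-invariant function. -/
lemma vgf_mono {n m : ℕ} (Ψ : Matrix (Fin n) (Fin m) ℝ → ℝ)
    (hconv : ConvexOn ℝ Set.univ Ψ)
    (habs : ∀ X Y : Matrix (Fin n) (Fin m) ℝ, (∀ i j, |X i j| = |Y i j|) → Ψ X = Ψ Y)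
    (A B : Matrix (Fin n) (Fin m) ℝ) (hAB : ∀ i j, |A i j| ≤ |B i j|) :
    Ψ A ≤ Ψ B := by
  have key : ∀ S : Finset (Fin n × Fin m),
      Ψ (Matrix.of fun i j => if (i, j) ∈ S then A i j else B i j) ≤ Ψ B := by
    intro S
    induction S using Finset.induction_on with
    | empty =>
        have : (Matrix.of fun i j => if (i, j) ∈ (∅ : Finset (Fin n × Fin m))
            then A i j else B i j) = B := by ext i j; simp
        rw [this]
    | @insert p S hp ih =>
        have heq : (Matrix.of fun i j => if (i, j) ∈ insert p S then A i j else B i j)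
            = Matrix.of fun i j => if i = p.1 ∧ j = p.2 then A p.1 p.2
                else (Matrix.of fun i j => if (i, j) ∈ S then A i j else B i j) i j := by
          ext i j
          simp only [Matrix.of_apply, Finset.mem_insert]
          by_cases h : i = p.1 ∧ j = p.2
          · rcases h with ⟨rfl, rfl⟩
            simp
          · have hne : (i, j) ≠ p := by
              intro hcon
              exact h ⟨congrArg Prod.fst hcon, congrArg Prod.snd hcon⟩
            simp [hne, h]
        rw [heq]
        refine le_trans (vgf_step Ψ hconv habs _ p.1 p.2 _ ?_) ih
        have hp' : (p.1, p.2) ∉ S := by rwa [Prod.mk.eta]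
        simp only [Matrix.of_apply, if_neg hp']
        exact hAB p.1 p.2
  have hA : A = Matrix.of fun i j => if (i, j) ∈ (Finset.univ : Finset (Fin n × Fin m))
      then A i j else B i j := by ext i j; simp
  rw [hA]
  exact key Finset.univ

/-- For a convex VGF `Ω_𝓜` (with `0 ∈ 𝓜`), the function `Ψ(X) = Ω_𝓜(|X|)` is convex
iff `Ω_𝓜(|X|) = inf { Ω_𝓜(Y) : Y ≥ |X| entrywise }` for every `X`. -/
theorem vgf_abs_convex_iff {n m : ℕ}
    (𝓜 : Set (Matrix (Fin m) (Fin m) ℝ))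
    (hcpt : IsCompact 𝓜) (hconvS : Convex ℝ 𝓜) (hsym : ∀ M ∈ 𝓜, M.IsSymm)
    (h0 : (0 : Matrix (Fin m) (Fin m) ℝ) ∈ 𝓜)
    (Ω : Matrix (Fin n) (Fin m) ℝ → ℝ)
    (hΩ : ∀ X, Ω X = ⨆ M ∈ 𝓜, (X * M * Xᵀ).trace)
    (hconv : ConvexOn ℝ Set.univ Ω) :
    ConvexOn ℝ Set.univ
        (fun X : Matrix (Fin n) (Fin m) ℝ => Ω (Matrix.of fun i j => |X i j|)) ↔
      ∀ X : Matrix (Fin n) (Fin m) ℝ,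
        Ω (Matrix.of fun i j => |X i j|) =
          sInf {v | ∃ Y : Matrix (Fin n) (Fin m) ℝ,
            (∀ i j, |X i j| ≤ Y i j) ∧ v = Ω Y} := by
  -- Ω is nonnegative
  have hnonneg : ∀ X, 0 ≤ Ω X := by
    have hzero : Ω 0 = 0 := by
      rw [hΩ]
      have h1 : ∀ M : Matrix (Fin m) (Fin m) ℝ,
          ((0 : Matrix (Fin n) (Fin m) ℝ) * M *
            (0 : Matrix (Fin n) (Fin m) ℝ)ᵀ).trace = 0 := by
        intro M; simp
      simp only [h1]
      simp [Real.iSup_const_zero]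
    have hneg : ∀ X, Ω (-X) = Ω X := by
      intro X
      rw [hΩ, hΩ]
      have h2 : ∀ M : Matrix (Fin m) (Fin m) ℝ,
          ((-X) * M * (-X)ᵀ).trace = (X * M * Xᵀ).trace := by
        intro M; simp
      simp only [h2]
    intro X
    have hX0 : (1/2 : ℝ) • X + (1/2 : ℝ) • (-X) = 0 := by
      rw [smul_neg, add_neg_cancel]
    have := hconv.2 (Set.mem_univ X) (Set.mem_univ (-X))
      (by norm_num : (0:ℝ) ≤ 1/2) (by norm_num : (0:ℝ) ≤ 1/2) (by norm_num)
    simp only [hX0, hzero, hneg, smul_eq_mul] at this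
    linarith
  constructor
  · -- convexity implies the infimum formula
    intro hΨ X
    set Ψ : Matrix (Fin n) (Fin m) ℝ → ℝ :=
      fun X => Ω (Matrix.of fun i j => |X i j|) with hΨdef
    have habs : ∀ A B : Matrix (Fin n) (Fin m) ℝ,
        (∀ i j, |A i j| = |B i j|) → Ψ A = Ψ B := by
      intro A B h
      simp only [hΨdef]
      congr 1
      ext i j
      exact h i j
    have hXabs : (Matrix.of fun i j => |X i j|) =
        Matrix.of fun i j => |(Matrix.of fun i j => |X i j|) i j| := by
      ext i j; simp [abs_abs]
    refine le_antisymm ?_ ?_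
    · -- Ω(|X|) is a lower bound of the set
      apply le_csInf
      · exact ⟨Ω (Matrix.of fun i j => |X i j|),
          Matrix.of fun i j => |X i j|, fun i j => le_of_eq rfl, rfl⟩
      · rintro v ⟨Y, hY, rfl⟩
        have hYnn : ∀ i j, 0 ≤ Y i j := fun i j => le_trans (abs_nonneg _) (hY i j)
        have hYabs : (Matrix.of fun i j => |Y i j|) = Y := by
          ext i j; exact abs_of_nonneg (hYnn i j)
        have : Ψ X ≤ Ψ Y := by
          apply vgf_mono Ψ hΨ habs
          intro i j
          rw [abs_of_nonneg (hYnn i j)]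
          exact hY i j
        simpa only [hΨdef, hYabs] using this
    · -- Ω(|X|) belongs to the set
      apply csInf_le
      · exact ⟨0, by rintro v ⟨Y, hY, rfl⟩; exact hnonneg Y⟩
      · exact ⟨Matrix.of fun i j => |X i j|, fun i j => le_of_eq rfl, rfl⟩
  · -- the infimum formula implies convexity
    intro h
    refine ⟨convex_univ, ?_⟩
    intro A _ B _ θ μ hθ hμ hθμ
    set Z := θ • A + μ • B with hZdef
    simp only []
    rw [h Z]
    set Y : Matrix (Fin n) (Fin m) ℝ :=
      θ • (Matrix.of fun i j => |A i j|) + μ • (Matrix.of fun i j => |B i j|) with hYdef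
    have hmem : Ω Y ∈ {v | ∃ Y' : Matrix (Fin n) (Fin m) ℝ,
        (∀ i j, |Z i j| ≤ Y' i j) ∧ v = Ω Y'} := by
      refine ⟨Y, ?_, rfl⟩
      intro i j
      simp only [hZdef, hYdef, Matrix.add_apply, Matrix.smul_apply, Matrix.of_apply,
        smul_eq_mul]
      calc |θ * A i j + μ * B i j| ≤ |θ * A i j| + |μ * B i j| := abs_add_le _ _
        _ = θ * |A i j| + μ * |B i j| := by
            rw [abs_mul, abs_mul, abs_of_nonneg hθ, abs_of_nonneg hμ]
    have hbdd : BddBelow {v | ∃ Y' : Matrix (Fin n) (Fin m) ℝ,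
        (∀ i j, |Z i j| ≤ Y' i j) ∧ v = Ω Y'} :=
      ⟨0, by rintro v ⟨Y', hY', rfl⟩; exact hnonneg Y'⟩
    calc sInf {v | ∃ Y' : Matrix (Fin n) (Fin m) ℝ,
          (∀ i j, |Z i j| ≤ Y' i j) ∧ v = Ω Y'} ≤ Ω Y := csInf_le hbdd hmem
      _ ≤ θ • Ω (Matrix.of fun i j => |A i j|) + μ • Ω (Matrix.of fun i j => |B i j|) :=
          hconv.2 (Set.mem_univ _) (Set.mem_univ _) hθ hμ hθμ
end

section
/- Let 𝓜 be a compact convex set of real symmetric m×m matrices containing the zero matrix such that Ω_𝓜(X) = sup_{M ∈ 𝓜} trace(X M Xᵀ) is convex and Ω_𝓜 = Ω_{𝓜∩S₊}. Suppose that for every entrywise nonnegative X ∈ ℝ^{n×m} there exists an entrywise nonnegative matrix G ∈ ℝ^{n×m} that is a subgradient of Ω_𝓜 at X, i.e., Ω_𝓜(Y) ≥ Ω_𝓜(X) + ⟨G, Y − X⟩ for all Y. Then Ψ(X) = Ω_𝓜(|X|) is convex on ℝ^{n×m}. -/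
open Matrix

/-- If a convex VGF `Ω_𝓜` (with `Ω_𝓜 = Ω_{𝓜 ∩ S₊}` and `0 ∈ 𝓜`) admits an entrywise
nonnegative subgradient at every entrywise nonnegative point, then
`Ψ(X) = Ω_𝓜(|X|)` is convex. -/
theorem vgf_abs_convex_of_nonneg_subgradient {n m : ℕ}
    (𝓜 : Set (Matrix (Fin m) (Fin m) ℝ))
    (hcpt : IsCompact 𝓜) (hconvS : Convex ℝ 𝓜) (hsym : ∀ M ∈ 𝓜, M.IsSymm)
    (h0 : (0 : Matrix (Fin m) (Fin m) ℝ) ∈ 𝓜)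
    (Ω : Matrix (Fin n) (Fin m) ℝ → ℝ)
    (hΩ : ∀ X, Ω X = ⨆ M ∈ 𝓜, (X * M * Xᵀ).trace)
    (heq : ∀ X : Matrix (Fin n) (Fin m) ℝ,
      Ω X = ⨆ M ∈ 𝓜 ∩ {A | A.PosSemidef}, (X * M * Xᵀ).trace)
    (hconv : ConvexOn ℝ Set.univ Ω)
    (hsub : ∀ X : Matrix (Fin n) (Fin m) ℝ, (∀ i j, 0 ≤ X i j) →
      ∃ G : Matrix (Fin n) (Fin m) ℝ, (∀ i j, 0 ≤ G i j) ∧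
        ∀ Y : Matrix (Fin n) (Fin m) ℝ, Ω X + (Gᵀ * (Y - X)).trace ≤ Ω Y) :
    ConvexOn ℝ Set.univ
      (fun X : Matrix (Fin n) (Fin m) ℝ => Ω (Matrix.of fun i j => |X i j|)) := by
  -- monotonicity of Ω on nonnegative matrices
  have mono : ∀ P Q : Matrix (Fin n) (Fin m) ℝ, (∀ i j, 0 ≤ P i j) →
      (∀ i j, P i j ≤ Q i j) → Ω P ≤ Ω Q := by
    intro P Q hP hPQ
    obtain ⟨G, hG, hGsub⟩ := hsub P hP
    have h := hGsub Q
    have htr : 0 ≤ (Gᵀ * (Q - P)).trace := by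
      rw [Matrix.trace]
      apply Finset.sum_nonneg
      intro k _
      simp only [Matrix.diag_apply, Matrix.mul_apply, Matrix.transpose_apply,
        Matrix.sub_apply]
      apply Finset.sum_nonneg
      intro j _
      exact mul_nonneg (hG j k) (sub_nonneg.2 (hPQ j k))
    linarith
  refine ⟨convex_univ, ?_⟩
  intro X _ Y _ a b ha hb hab
  simp only [smul_eq_mul]
  set A : Matrix (Fin n) (Fin m) ℝ := Matrix.of fun i j => |X i j| with hA
  set B : Matrix (Fin n) (Fin m) ℝ := Matrix.of fun i j => |Y i j| with hB
  have h1 : Ω (Matrix.of fun i j => |(a • X + b • Y) i j|) ≤ Ω (a • A + b • B) := by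
    apply mono
    · intro i j; exact abs_nonneg _
    · intro i j
      simp only [Matrix.of_apply, Matrix.add_apply, Matrix.smul_apply, smul_eq_mul, hA, hB]
      calc |a * X i j + b * Y i j| ≤ |a * X i j| + |b * Y i j| := abs_add_le _ _
        _ = a * |X i j| + b * |Y i j| := by
            rw [abs_mul, abs_mul, abs_of_nonneg ha, abs_of_nonneg hb]
  have h2 := hconv.2 (Set.mem_univ A) (Set.mem_univ B) ha hb hab
  simp only [smul_eq_mul] at h2
  linarith
end

section
/- Let 𝓜 be a convex set of real symmetric m×m matrices, let G be symmetric positive semidefinite, and let P ∈ 𝓜 satisfy the projection variational inequality ⟨G − P, Q − P⟩ ≤ 0 for all Q ∈ 𝓜 (i.e., P is the orthogonal projection of G onto 𝓜 in the trace inner product). Write P = P₊ − P₋ with P₊, P₋ positive semidefinite and ⟨P₊, P₋⟩ = 0 (the Moreau decomposition of P with respect to the positive semidefinite cone). If P₊ ∈ 𝓜, then P₋ = 0, i.e., P is positive semidefinite. -/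
/- Testing the variational inequality at `Q = P₊` gives `⟨G - P, P₋⟩ ≤ 0`. Orthogonality of the
two parts turns `-⟨P, P₋⟩` into `‖P₋‖²`, so `⟨G, P₋⟩ + ‖P₋‖² ≤ 0`; the first term is nonnegative
because both `G` and `P₋` are positive semidefinite, hence `‖P₋‖ = 0`. -/

open Matrix

open scoped MatrixOrder ComplexOrder in
theorem Matrix.PosSemidef.trace_mul_nonneg {n 𝕜 : Type*} [Fintype n] [RCLike 𝕜]
    {A B : Matrix n n 𝕜} (hA : A.PosSemidef) (hB : B.PosSemidef) : 0 ≤ (A * B).trace := by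
  classical
  set S := CFC.sqrt B
  have hS : Sᴴ = S := (CFC.sqrt_nonneg B).posSemidef.isHermitian
  calc 0 ≤ (S * A * Sᴴ).trace := (hA.mul_mul_conjTranspose_same S).trace_nonneg
    _ = (A * (S * S)).trace := by rw [hS, Matrix.mul_assoc, trace_mul_comm, Matrix.mul_assoc]
    _ = (A * B).trace := by rw [CFC.sqrt_mul_sqrt_self B hB.nonneg]

theorem Matrix.trace_transpose_mul_self_eq_zero_iff {m n : Type*} [Fintype m] [Fintype n]
    {A : Matrix m n ℝ} : (Aᵀ * A).trace = 0 ↔ A = 0 := by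
  rw [← conjTranspose_eq_transpose_of_trivial, trace_conjTranspose_mul_self_eq_zero_iff]

theorem proj_of_psd_positive_part_general {m : ℕ}
    (𝓜 : Set (Matrix (Fin m) (Fin m) ℝ))
    (G : Matrix (Fin m) (Fin m) ℝ) (hG : G.PosSemidef)
    (P : Matrix (Fin m) (Fin m) ℝ)
    (hproj : ∀ Q ∈ 𝓜, ((G - P)ᵀ * (Q - P)).trace ≤ 0)
    (Pp Pm : Matrix (Fin m) (Fin m) ℝ)
    (hPm : Pm.PosSemidef)
    (hdec : P = Pp - Pm) (horth : (Ppᵀ * Pm).trace = 0)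
    (hPp𝓜 : Pp ∈ 𝓜) :
    Pm = 0 := by
  have hvar := hproj Pp hPp𝓜
  rw [hdec, sub_sub_cancel] at hvar
  have hexpand : ((G - (Pp - Pm))ᵀ * Pm).trace
      = (Gᵀ * Pm).trace - (Ppᵀ * Pm).trace + (Pmᵀ * Pm).trace := by
    simp only [transpose_sub, Matrix.sub_mul, trace_sub]
    ring
  have hGPm : 0 ≤ (Gᵀ * Pm).trace := hG.transpose.trace_mul_nonneg hPm
  have hPmPm : 0 ≤ (Pmᵀ * Pm).trace := by
    simpa using (posSemidef_conjTranspose_mul_self Pm).trace_nonneg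
  exact trace_transpose_mul_self_eq_zero_iff.mp (by linarith)

/-- If `P` is the projection of a positive semidefinite `G` onto a convex set `𝓜` of
symmetric matrices and the positive part `P₊` of `P` belongs to `𝓜`, then `P₋ = 0`,
i.e. `P` is positive semidefinite. -/
theorem proj_of_psd_positive_part {m : ℕ}
    (𝓜 : Set (Matrix (Fin m) (Fin m) ℝ)) (hconvS : Convex ℝ 𝓜)
    (hsym : ∀ M ∈ 𝓜, M.IsSymm)
    (G : Matrix (Fin m) (Fin m) ℝ) (hG : G.PosSemidef)
    (P : Matrix (Fin m) (Fin m) ℝ) (hP : P ∈ 𝓜)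
    (hproj : ∀ Q ∈ 𝓜, ((G - P)ᵀ * (Q - P)).trace ≤ 0)
    (Pp Pm : Matrix (Fin m) (Fin m) ℝ)
    (hPp : Pp.PosSemidef) (hPm : Pm.PosSemidef)
    (hdec : P = Pp - Pm) (horth : (Ppᵀ * Pm).trace = 0)
    (hPp𝓜 : Pp ∈ 𝓜) :
    Pm = 0 :=
  proj_of_psd_positive_part_general 𝓜 G hG P hproj Pp Pm hPm hdec horth hPp𝓜
end

section
/- Let M₀ ∈ ℝ^{m×m} be symmetric positive definite, let 𝐃 ∈ ℝ^{n×(mp)}, g₀ ∈ ℝ^p, and λ > 0. Then the unique minimizer over X ∈ ℝ^{n×m} of the function X ↦ ⟨X, 𝐃(I_m ⊗ g₀)⟩ + λ·trace(X M₀ Xᵀ) is X* = −(1/(2λ)) · 𝐃 (M₀⁻¹ ⊗ g₀); in particular, the minimizer lies in the column space of 𝐃, i.e., X* = 𝐃C with coefficient matrix C = −(1/(2λ)) (M₀⁻¹ ⊗ g₀). -/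
/-!
The identity `(I ⊗ g₀) M₀⁻¹ = M₀⁻¹ ⊗ g₀` turns the definition of `X*` into the stationarity
condition `𝐃 (I ⊗ g₀) = -2λ X* M₀`. With this linear term, completing the square gives
`f Y = f X* + λ tr((Y - X*) M₀ (Y - X*)ᵀ)`, and the last trace is a sum of the quadratic forms of
`M₀` at the rows of `Y - X*`, hence positive when `Y ≠ X*`.
-/

open Matrix

namespace Matrix

variable {R m n : Type*} [Fintype m] [Fintype n]

theorem PosDef.trace_mul_mul_conjTranspose_pos [CommRing R] [PartialOrder R] [StarRing R]
    [IsOrderedCancelAddMonoid R] {M : Matrix m m R} (hM : M.PosDef) {Z : Matrix n m R}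
    (hZ : Z ≠ 0) : 0 < (Z * M * Zᴴ).trace := by
  have hdiag : ∀ i, (Z * M * Zᴴ) i i = star (star (Z i)) ⬝ᵥ (M *ᵥ star (Z i)) := by
    intro i
    simp only [star_star, mul_apply, dotProduct, mulVec, conjTranspose_apply, Pi.star_apply,
      Finset.sum_mul, Finset.mul_sum, mul_assoc]
    exact Finset.sum_comm
  obtain ⟨i, hi⟩ : ∃ i, Z i ≠ 0 := Function.ne_iff.mp hZ
  refine Finset.sum_pos' (fun j _ => ?_) ⟨i, Finset.mem_univ i, ?_⟩
  · simpa only [diag_apply, hdiag] using hM.posSemidef.dotProduct_mulVec_nonneg (star (Z j))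
  · simpa only [diag_apply, hdiag] using hM.dotProduct_mulVec_pos (star_ne_zero.mpr hi)

end Matrix

section KronCol

variable {R ι κ μ ν : Type*}

/-- The Kronecker product `N ⊗ g` of a matrix with a column vector. -/
def kronCol [Mul R] (N : Matrix ι μ R) (g : ν → R) : Matrix (ι × ν) μ R :=
  of fun ik j => N ik.1 j * g ik.2

theorem kronCol_mul [CommSemiring R] [Fintype κ] (N : Matrix ι κ R) (N' : Matrix κ μ R)
    (g : ν → R) : kronCol (N * N') g = kronCol N g * N' := by
  ext ⟨i, k⟩ j
  simp only [kronCol, of_apply, mul_apply, Finset.sum_mul]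
  exact Finset.sum_congr rfl fun _ _ => by ring

end KronCol

section TraceObjective

variable {R ι κ : Type*} [Fintype ι] [Fintype κ]

def traceObjective [CommSemiring R] (A : Matrix ι κ R) (M : Matrix κ κ R) (c : R)
    (X : Matrix ι κ R) : R :=
  (Xᵀ * A).trace + c * (X * M * Xᵀ).trace

/-- Completing the square: `A = -2c • X M` is the stationarity condition at `X`. -/
theorem traceObjective_eq_add [CommRing R] {M : Matrix κ κ R} (hM : M.IsSymm) (c : R)
    (X Y : Matrix ι κ R) :
    traceObjective ((-(2 * c)) • (X * M)) M c Y =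
      traceObjective ((-(2 * c)) • (X * M)) M c X + c * ((Y - X) * M * (Y - X)ᵀ).trace := by
  obtain ⟨Z, rfl⟩ : ∃ Z, Y = X + Z := ⟨Y - X, by abel⟩
  have hcross : (Z * M * Xᵀ).trace = (X * M * Zᵀ).trace := by
    rw [← trace_transpose, transpose_mul, transpose_mul, transpose_transpose, hM.eq,
      Matrix.mul_assoc]
  have hcross' : (Zᵀ * (X * M)).trace = (X * M * Zᵀ).trace := trace_mul_comm _ _
  simp only [traceObjective, add_sub_cancel_left, transpose_add, Matrix.add_mul, Matrix.mul_add,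
    Matrix.mul_smul, trace_add, trace_smul, smul_eq_mul, hcross, hcross']
  ring

theorem traceObjective_lt_of_ne {M : Matrix κ κ ℝ} (hM : M.PosDef) {c : ℝ} (hc : 0 < c)
    {X Y : Matrix ι κ ℝ} (hY : Y ≠ X) :
    traceObjective ((-(2 * c)) • (X * M)) M c X <
      traceObjective ((-(2 * c)) • (X * M)) M c Y := by
  have hpos := hM.trace_mul_mul_conjTranspose_pos (sub_ne_zero.mpr hY)
  rw [conjTranspose_eq_transpose_of_trivial] at hpos
  rw [traceObjective_eq_add (isHermitian_iff_isSymm.mp hM.isHermitian) c X Y]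
  exact lt_add_of_pos_right _ (mul_pos hc hpos)

end TraceObjective

/-- Representer theorem core: for positive definite `M₀` and `λ > 0`, the unique
minimizer of `X ↦ ⟨X, 𝐃(I_m ⊗ g₀)⟩ + λ tr(X M₀ Xᵀ)` is
`X* = -(1/(2λ)) 𝐃 (M₀⁻¹ ⊗ g₀)`, which lies in the column space of `𝐃`. -/
theorem representer_core {n m p : ℕ}
    (M₀ : Matrix (Fin m) (Fin m) ℝ) (hM₀ : M₀.PosDef)
    (D : Matrix (Fin n) (Fin m × Fin p) ℝ) (g₀ : Fin p → ℝ)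
    (lam : ℝ) (hlam : 0 < lam)
    (Kg : Matrix (Fin m × Fin p) (Fin m) ℝ)
    (hKg : ∀ i k j, Kg (i, k) j = (if i = j then (1 : ℝ) else 0) * g₀ k)
    (KMg : Matrix (Fin m × Fin p) (Fin m) ℝ)
    (hKMg : ∀ i k j, KMg (i, k) j = M₀⁻¹ i j * g₀ k)
    (Xstar : Matrix (Fin n) (Fin m) ℝ)
    (hX : Xstar = (-(1 / (2 * lam))) • (D * KMg)) :
    (∀ Y : Matrix (Fin n) (Fin m) ℝ, Y ≠ Xstar →
      (Xstarᵀ * (D * Kg)).trace + lam * (Xstar * M₀ * Xstarᵀ).trace <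
        (Yᵀ * (D * Kg)).trace + lam * (Y * M₀ * Yᵀ).trace) ∧
    Xstar = D * ((-(1 / (2 * lam))) • KMg) := by
  have hKg_eq : Kg = kronCol 1 g₀ := by
    ext ⟨i, k⟩ j
    simp [kronCol, hKg, one_apply]
  have hKMg_eq : KMg = Kg * M₀⁻¹ := by
    rw [hKg_eq, ← kronCol_mul, Matrix.one_mul]
    ext ⟨i, k⟩ j
    exact hKMg i k j
  have hgrad : D * Kg = (-(2 * lam)) • (Xstar * M₀) := by
    rw [hX, hKMg_eq, smul_mul, smul_smul, ← Matrix.mul_assoc,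
      nonsing_inv_mul_cancel_right M₀ _ ((isUnit_iff_isUnit_det M₀).mp hM₀.isUnit), neg_mul_neg,
      mul_one_div_cancel (by positivity), one_smul]
  refine ⟨fun Y hY => ?_, by rw [hX, Matrix.mul_smul]⟩
  rw [hgrad]
  exact traceObjective_lt_of_ne hM₀ hlam hY
end

section
/- Let ‖·‖ be a norm on ℝⁿ. Then the function x ↦ ‖|x|‖, where |x| is the entrywise absolute value of x, is itself a norm on ℝⁿ if and only if ‖|x|‖ = min{ ‖y‖ : y ∈ ℝⁿ, y ≥ |x| entrywise } holds for every x ∈ ℝⁿ. -/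
private lemma aux_update {n : ℕ} (N : (Fin n → ℝ) → ℝ)
    (hsmul : ∀ (c : ℝ) (x : Fin n → ℝ),
        N (fun i => |(c • x) i|) = |c| * N (fun i => |x i|))
    (hadd : ∀ x y : Fin n → ℝ,
        N (fun i => |(x + y) i|) ≤ N (fun i => |x i|) + N (fun i => |y i|))
    (w : Fin n → ℝ) (k : Fin n) (t : ℝ) (ht : |t| ≤ |w k|) :
    N (fun i => |Function.update w k t i|) ≤ N (fun i => |w i|) := by
  by_cases hw : w k = 0
  · have ht0 : t = 0 := by
      have : |t| ≤ 0 := by simpa [hw] using ht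
      exact abs_eq_zero.mp (le_antisymm this (abs_nonneg t))
    have : Function.update w k t = w := by
      rw [ht0, ← hw]; exact Function.update_eq_self k w
    rw [this]
  · set c : ℝ := t / w k with hc
    have hc1 : |c| ≤ 1 := by
      rw [hc, abs_div]
      exact div_le_one_of_le₀ ht (abs_nonneg _)
    set u : Fin n → ℝ := Function.update w k (-(w k)) with hu
    have habs : (fun i => |u i|) = (fun i => |w i|) := by
      funext j
      by_cases hj : j = k
      · subst hj; simp [hu]
      · simp [hu, Function.update_of_ne hj]
    set a : ℝ := (1 + c) / 2 with ha
    set b : ℝ := (1 - c) / 2 with hb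
    have ha0 : 0 ≤ a := by
      have := neg_abs_le c
      rw [ha]; linarith
    have hb0 : 0 ≤ b := by
      have := le_abs_self c
      rw [hb]; linarith
    have hkey : Function.update w k t = a • w + b • u := by
      funext j
      by_cases hj : j = k
      · subst hj
        simp only [Function.update_self, Pi.add_apply, Pi.smul_apply, hu,
          Function.update_self, smul_eq_mul]
        have : a * w j + b * (-(w j)) = c * w j := by rw [ha, hb]; ring
        rw [this, hc]
        field_simp
      · simp only [Function.update_of_ne hj, Pi.add_apply, Pi.smul_apply, hu,
          Function.update_of_ne hj, smul_eq_mul]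
        rw [ha, hb]; ring
    calc N (fun i => |Function.update w k t i|)
        = N (fun i => |(a • w + b • u) i|) := by rw [hkey]
      _ ≤ N (fun i => |(a • w) i|) + N (fun i => |(b • u) i|) := hadd _ _
      _ = |a| * N (fun i => |w i|) + |b| * N (fun i => |u i|) := by
          rw [hsmul a w, hsmul b u]
      _ = a * N (fun i => |w i|) + b * N (fun i => |w i|) := by
          rw [abs_of_nonneg ha0, abs_of_nonneg hb0, habs]
      _ = N (fun i => |w i|) := by rw [ha, hb]; ring

private lemma aux_mono {n : ℕ} (N : (Fin n → ℝ) → ℝ)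
    (hsmul : ∀ (c : ℝ) (x : Fin n → ℝ),
        N (fun i => |(c • x) i|) = |c| * N (fun i => |x i|))
    (hadd : ∀ x y : Fin n → ℝ,
        N (fun i => |(x + y) i|) ≤ N (fun i => |x i|) + N (fun i => |y i|))
    (a b : Fin n → ℝ) (ha : ∀ i, 0 ≤ a i) (hab : ∀ i, a i ≤ b i) :
    N (fun i => |a i|) ≤ N (fun i => |b i|) := by
  have key : ∀ s : Finset (Fin n),
      N (fun i => |(if i ∈ s then a i else b i)|) ≤ N (fun i => |b i|) := by
    intro s
    induction s using Finset.induction_on with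
    | empty => simp
    | @insert k s hk ih =>
      have heq : (fun i => (if i ∈ insert k s then a i else b i)) =
          Function.update (fun i => if i ∈ s then a i else b i) k (a k) := by
        funext j
        by_cases hj : j = k
        · subst hj; simp [Function.update_self]
        · simp [Function.update_of_ne hj, hj]
      have ht : |a k| ≤ |(fun i => if i ∈ s then a i else b i) k| := by
        simp only [hk, if_neg hk]
        rw [abs_of_nonneg (ha k)]
        exact le_trans (hab k) (le_abs_self _)
      calc N (fun i => |(if i ∈ insert k s then a i else b i)|)
          = N (fun i => |Function.update
              (fun i => if i ∈ s then a i else b i) k (a k) i|) := by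
            congr 1; funext i; rw [congrFun heq i]
        _ ≤ N (fun i => |(if i ∈ s then a i else b i)|) :=
            aux_update N hsmul hadd _ k (a k) ht
        _ ≤ N (fun i => |b i|) := ih
  simpa using key Finset.univ

/-- For a norm `N` on `ℝⁿ`, the function `x ↦ N(|x|)` is itself a norm iff
`N(|x|) = min { N(y) : y ≥ |x| entrywise }` for every `x`. -/
theorem abs_norm_iff_min {n : ℕ}
    (N : (Fin n → ℝ) → ℝ)
    (hN0 : ∀ x, N x = 0 ↔ x = 0)
    (hNsmul : ∀ (c : ℝ) (x : Fin n → ℝ), N (c • x) = |c| * N x)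
    (hNadd : ∀ x y : Fin n → ℝ, N (x + y) ≤ N x + N y) :
    ((∀ (c : ℝ) (x : Fin n → ℝ),
        N (fun i => |(c • x) i|) = |c| * N (fun i => |x i|)) ∧
     (∀ x y : Fin n → ℝ,
        N (fun i => |(x + y) i|) ≤ N (fun i => |x i|) + N (fun i => |y i|)) ∧
     (∀ x : Fin n → ℝ, N (fun i => |x i|) = 0 → x = 0)) ↔
    (∀ x : Fin n → ℝ,
      IsLeast {v | ∃ y : Fin n → ℝ, (∀ i, |x i| ≤ y i) ∧ v = N y}
        (N (fun i => |x i|))) := by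
  constructor
  · rintro ⟨hsmul, hadd, _⟩ x
    constructor
    · exact ⟨fun i => |x i|, fun i => le_refl _, rfl⟩
    · rintro v ⟨y, hy, rfl⟩
      have hy0 : ∀ i, 0 ≤ y i := fun i => le_trans (abs_nonneg _) (hy i)
      have h1 : N (fun i => |x i|) = N (fun i => |(fun j => |x j|) i|) := by
        congr 1; funext i; rw [abs_abs]
      have h2 : N y = N (fun i => |y i|) := by
        congr 1; funext i; rw [abs_of_nonneg (hy0 i)]
      rw [h1, h2]
      exact aux_mono N hsmul hadd _ y (fun i => abs_nonneg _) hy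
  · intro hmin
    refine ⟨?_, ?_, ?_⟩
    · intro c x
      have h1 : (fun i => |(c • x) i|) = |c| • (fun i => |x i|) := by
        funext i
        simp [abs_mul]
      rw [h1, hNsmul, abs_abs]
    · intro x y
      have hmem : N ((fun i => |x i|) + (fun i => |y i|)) ∈
          {v | ∃ z : Fin n → ℝ, (∀ i, |(x + y) i| ≤ z i) ∧ v = N z} :=
        ⟨_, fun i => abs_add_le (x i) (y i), rfl⟩
      exact le_trans ((hmin (x + y)).2 hmem) (hNadd _ _)
    · intro x hx
      have := (hN0 _).mp hx
      funext i
      have : |x i| = 0 := congrFun this i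
      exact abs_eq_zero.mp this
end
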